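/- arXiv:2202.07079 — 2 statements merged into one kernel-verified Lean document; each statement's English description precedes it below -/
import Mathlib

section
/- Let $\bar{X}, X \in \mathbb{R}^{t \times d}$, $\varepsilon \in \mathbb{R}^t$, $\theta^* \in \mathbb{R}^d$, $\rho > 0$, and set $y = \bar{X}\theta^* + \varepsilon$, $\Omega = \rho I + X^\top X$, $\hat{\theta} = \Omega^{-1}X^\top y$. Then for every $x \in \mathbb{R}^d$: $x^\top \hat{\theta} - x^\top \theta^* \;\leq\; \|x\|_{\Omega^{-1}} \left( \|X^\top \varepsilon\|_{\Omega^{-1}} + \|\theta^*\|_2 \,\|\bar{X} - X\| + \sqrt{\rho}\,\|\theta^*\|_2 \right)$. -/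
open Matrix

/-- Spectral (operator) norm of a real matrix, viewed as the operator norm of the
induced linear map between Euclidean spaces. -/
noncomputable def opNorm {n m : ℕ} (A : Matrix (Fin n) (Fin m) ℝ) : ℝ :=
  ‖LinearMap.toContinuousLinearMap (Matrix.toEuclideanLin A)‖

/-- Euclidean norm of a vector. -/
noncomputable def vecNorm {d : ℕ} (a : Fin d → ℝ) : ℝ := Real.sqrt (a ⬝ᵥ a)

/-- Weighted norm `‖a‖_Ω = sqrt (aᵀ Ω a)`. -/
noncomputable def wnorm {r : ℕ} (Ω : Matrix (Fin r) (Fin r) ℝ) (a : Fin r → ℝ) : ℝ :=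
  Real.sqrt (a ⬝ᵥ (Ω *ᵥ a))

/-- `k`-th largest singular value of a matrix, characterized as the distance (in the
spectral norm) to the set of matrices of rank `< k` (approximation numbers). -/
noncomputable def singVal {n m : ℕ} (k : ℕ) (A : Matrix (Fin n) (Fin m) ℝ) : ℝ :=
  sInf {c | ∃ B : Matrix (Fin n) (Fin m) ℝ, B.rank < k ∧ c = opNorm (A - B)}

/-!
Multiplying out, `Ω (θ̂ - θ*) = Xᵀ ε + Xᵀ (X̄ - X) θ* - ρ θ*`, so Cauchy–Schwarz for the
`Ω⁻¹`-inner product and the triangle inequality reduce the claim to bounding the `Ω⁻¹`-norms of the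
last two terms. Both follow from one contraction estimate: if `Aᵀ A ≤ Ω` in the Loewner order, then
`‖Aᵀ z‖_{Ω⁻¹} ≤ ‖z‖₂`. It applies with `A = X`, since `Ω - Xᵀ X = ρ I`, and with `A = √ρ I`,
since `Ω - ρ I = Xᵀ X`.
-/

section EuclideanNorm

variable {n : ℕ}

lemma vecNorm_eq_norm (a : Fin n → ℝ) : vecNorm a = ‖WithLp.toLp 2 a‖ := by
  simp [vecNorm, EuclideanSpace.norm_eq, dotProduct, sq]

lemma vecNorm_nonneg (a : Fin n → ℝ) : 0 ≤ vecNorm a := Real.sqrt_nonneg _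

lemma dotProduct_le_vecNorm_mul_vecNorm (a b : Fin n → ℝ) : a ⬝ᵥ b ≤ vecNorm a * vecNorm b := by
  simpa [vecNorm_eq_norm, EuclideanSpace.inner_eq_star_dotProduct, dotProduct_comm] using
    real_inner_le_norm (WithLp.toLp 2 a) (WithLp.toLp 2 b)

lemma vecNorm_add_le (a b : Fin n → ℝ) : vecNorm (a + b) ≤ vecNorm a + vecNorm b := by
  simpa [vecNorm_eq_norm] using norm_add_le (WithLp.toLp 2 a) (WithLp.toLp 2 b)

lemma vecNorm_sub_le (a b : Fin n → ℝ) : vecNorm (a - b) ≤ vecNorm a + vecNorm b := by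
  simpa [vecNorm_eq_norm] using norm_sub_le (WithLp.toLp 2 a) (WithLp.toLp 2 b)

lemma vecNorm_smul (c : ℝ) (a : Fin n → ℝ) : vecNorm (c • a) = |c| * vecNorm a := by
  simpa [vecNorm_eq_norm] using norm_smul c (WithLp.toLp 2 a)

lemma vecNorm_mulVec_le {m : ℕ} (A : Matrix (Fin n) (Fin m) ℝ) (v : Fin m → ℝ) :
    vecNorm (A *ᵥ v) ≤ opNorm A * vecNorm v := by
  simpa [vecNorm_eq_norm, opNorm] using
    (LinearMap.toContinuousLinearMap (Matrix.toEuclideanLin A)).le_opNorm (WithLp.toLp 2 v)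

end EuclideanNorm

section WeightedNorm

variable {n : ℕ} {M : Matrix (Fin n) (Fin n) ℝ}

lemma dotProduct_transpose_mul_self_mulVec {m : ℕ} (B : Matrix (Fin m) (Fin n) ℝ)
    (a b : Fin n → ℝ) : a ⬝ᵥ ((Bᵀ * B) *ᵥ b) = (B *ᵥ a) ⬝ᵥ (B *ᵥ b) := by
  rw [← mulVec_mulVec, dotProduct_mulVec, ← mulVec_transpose, transpose_transpose]

lemma wnorm_transpose_mul_self {m : ℕ} (B : Matrix (Fin m) (Fin n) ℝ) (a : Fin n → ℝ) :
    wnorm (Bᵀ * B) a = vecNorm (B *ᵥ a) := by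
  rw [wnorm, vecNorm, dotProduct_transpose_mul_self_mulVec]

open scoped MatrixOrder Matrix.Norms.L2Operator in
lemma Matrix.PosSemidef.exists_eq_transpose_mul_self (hM : M.PosSemidef) :
    ∃ B : Matrix (Fin n) (Fin n) ℝ, M = Bᵀ * B :=
  CStarAlgebra.nonneg_iff_eq_star_mul_self.mp hM.nonneg

lemma wnorm_nonneg (a : Fin n → ℝ) : 0 ≤ wnorm M a := Real.sqrt_nonneg _

lemma Matrix.PosSemidef.wnorm_mul_self (hM : M.PosSemidef) (a : Fin n → ℝ) :
    wnorm M a * wnorm M a = a ⬝ᵥ (M *ᵥ a) :=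
  Real.mul_self_sqrt (by simpa using hM.dotProduct_mulVec_nonneg a)

lemma Matrix.PosSemidef.dotProduct_mulVec_le_wnorm_mul_wnorm (hM : M.PosSemidef)
    (a b : Fin n → ℝ) : a ⬝ᵥ (M *ᵥ b) ≤ wnorm M a * wnorm M b := by
  obtain ⟨B, rfl⟩ := hM.exists_eq_transpose_mul_self
  simpa only [dotProduct_transpose_mul_self_mulVec, wnorm_transpose_mul_self] using
    dotProduct_le_vecNorm_mul_vecNorm (B *ᵥ a) (B *ᵥ b)

lemma Matrix.PosSemidef.wnorm_add_le (hM : M.PosSemidef) (a b : Fin n → ℝ) :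
    wnorm M (a + b) ≤ wnorm M a + wnorm M b := by
  obtain ⟨B, rfl⟩ := hM.exists_eq_transpose_mul_self
  simpa only [wnorm_transpose_mul_self, mulVec_add] using vecNorm_add_le (B *ᵥ a) (B *ᵥ b)

lemma Matrix.PosSemidef.wnorm_sub_le (hM : M.PosSemidef) (a b : Fin n → ℝ) :
    wnorm M (a - b) ≤ wnorm M a + wnorm M b := by
  obtain ⟨B, rfl⟩ := hM.exists_eq_transpose_mul_self
  simpa only [wnorm_transpose_mul_self, mulVec_sub] using vecNorm_sub_le (B *ᵥ a) (B *ᵥ b)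

theorem wnorm_inv_transpose_mulVec_le {m : ℕ} {Ω : Matrix (Fin n) (Fin n) ℝ}
    (A : Matrix (Fin m) (Fin n) ℝ) (hΩ : Ω.PosDef) (hA : (Ω - Aᵀ * A).PosSemidef)
    (z : Fin m → ℝ) : wnorm Ω⁻¹ (Aᵀ *ᵥ z) ≤ vecNorm z := by
  set u := Ω⁻¹ *ᵥ (Aᵀ *ᵥ z)
  set s := wnorm Ω⁻¹ (Aᵀ *ᵥ z)
  have hΩu : Ω *ᵥ u = Aᵀ *ᵥ z := by
    rw [mulVec_mulVec, mul_nonsing_inv _ ((isUnit_iff_isUnit_det Ω).mp hΩ.isUnit), one_mulVec]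
  have hs : s * s = (Aᵀ *ᵥ z) ⬝ᵥ u := hΩ.inv.posSemidef.wnorm_mul_self _
  have hAu : vecNorm (A *ᵥ u) ≤ s := by
    have hquad : 0 ≤ u ⬝ᵥ ((Ω - Aᵀ * A) *ᵥ u) := by simpa using hA.dotProduct_mulVec_nonneg u
    rw [sub_mulVec, dotProduct_sub, dotProduct_transpose_mul_self_mulVec, hΩu,
      dotProduct_comm] at hquad
    rw [vecNorm, Real.sqrt_le_left (wnorm_nonneg _), sq]
    linarith
  have : s * s ≤ vecNorm z * s := by
    rw [hs, dotProduct_comm, dotProduct_transpose_mulVec]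
    exact (dotProduct_le_vecNorm_mul_vecNorm z _).trans
      (mul_le_mul_of_nonneg_left hAu (vecNorm_nonneg z))
  nlinarith [wnorm_nonneg (M := Ω⁻¹) (Aᵀ *ᵥ z), vecNorm_nonneg z]

lemma wnorm_inv_smul_le {Ω : Matrix (Fin n) (Fin n) ℝ} (hΩ : Ω.PosDef) {ρ : ℝ} (hρ : 0 ≤ ρ)
    (hρΩ : (Ω - ρ • 1).PosSemidef) (θ : Fin n → ℝ) :
    wnorm Ω⁻¹ (ρ • θ) ≤ Real.sqrt ρ * vecNorm θ := by
  have hA : (Ω - (Real.sqrt ρ • 1 : Matrix (Fin n) (Fin n) ℝ)ᵀ * (Real.sqrt ρ • 1)).PosSemidef := by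
    simpa [smul_smul, Real.mul_self_sqrt hρ] using hρΩ
  simpa [smul_mulVec, smul_smul, Real.mul_self_sqrt hρ, vecNorm_smul,
    abs_of_nonneg (Real.sqrt_nonneg ρ)] using
    wnorm_inv_transpose_mulVec_le _ hΩ hA (Real.sqrt ρ • θ)

end WeightedNorm

section Ridge

variable {t d : ℕ}

lemma posDef_smul_one_add_transpose_mul_self {ρ : ℝ} (hρ : 0 < ρ)
    (X : Matrix (Fin t) (Fin d) ℝ) : (ρ • (1 : Matrix (Fin d) (Fin d) ℝ) + Xᵀ * X).PosDef :=
  (PosDef.one.smul hρ).add_posSemidef (by simpa using posSemidef_conjTranspose_mul_self X)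

lemma ridge_sub_eq {Xbar X : Matrix (Fin t) (Fin d) ℝ} {ρ : ℝ} {Ω : Matrix (Fin d) (Fin d) ℝ}
    (hΩ : Ω = ρ • 1 + Xᵀ * X) (hdet : IsUnit Ω.det) (θ : Fin d → ℝ) (ε : Fin t → ℝ) :
    Ω⁻¹ *ᵥ (Xᵀ *ᵥ (Xbar *ᵥ θ + ε)) - θ
      = Ω⁻¹ *ᵥ (Xᵀ *ᵥ ε + Xᵀ *ᵥ ((Xbar - X) *ᵥ θ) - ρ • θ) := by
  conv_lhs => enter [2]; rw [← one_mulVec θ, ← nonsing_inv_mul Ω hdet, ← mulVec_mulVec]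
  rw [← mulVec_sub]
  congr 1
  simp only [hΩ, add_mulVec, smul_mulVec, one_mulVec, ← mulVec_mulVec, sub_mulVec, mulVec_add,
    mulVec_sub]
  abel

end Ridge

/-- pointwise confidence bound for ridge regression with errors in
variables. -/
theorem stmt_5 {t d : ℕ} (Xbar X : Matrix (Fin t) (Fin d) ℝ)
    (ε : Fin t → ℝ) (θstar : Fin d → ℝ) (ρ : ℝ) (hρ : 0 < ρ)
    (y : Fin t → ℝ) (hy : y = Xbar *ᵥ θstar + ε)
    (Ω : Matrix (Fin d) (Fin d) ℝ)
    (hΩ : Ω = ρ • (1 : Matrix (Fin d) (Fin d) ℝ) + Xᵀ * X)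
    (θhat : Fin d → ℝ) (hθhat : θhat = Ω⁻¹ *ᵥ (Xᵀ *ᵥ y)) :
    ∀ x : Fin d → ℝ,
      x ⬝ᵥ θhat - x ⬝ᵥ θstar ≤
        wnorm Ω⁻¹ x * (wnorm Ω⁻¹ (Xᵀ *ᵥ ε) + vecNorm θstar * opNorm (Xbar - X)
          + Real.sqrt ρ * vecNorm θstar) := by
  intro x
  have hΩpd : Ω.PosDef := hΩ ▸ posDef_smul_one_add_transpose_mul_self hρ X
  have hΩinv : Ω⁻¹.PosSemidef := hΩpd.inv.posSemidef
  have hmismatch : wnorm Ω⁻¹ (Xᵀ *ᵥ ((Xbar - X) *ᵥ θstar)) ≤ vecNorm θstar * opNorm (Xbar - X) :=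
    calc _ ≤ vecNorm ((Xbar - X) *ᵥ θstar) :=
          wnorm_inv_transpose_mulVec_le X hΩpd (by simpa [hΩ] using PosSemidef.one.smul hρ.le) _
      _ ≤ _ := by rw [mul_comm]; exact vecNorm_mulVec_le _ _
  have hbias : wnorm Ω⁻¹ (ρ • θstar) ≤ Real.sqrt ρ * vecNorm θstar :=
    wnorm_inv_smul_le hΩpd hρ.le (by simpa [hΩ] using posSemidef_conjTranspose_mul_self X) θstar
  calc x ⬝ᵥ θhat - x ⬝ᵥ θstar
      = x ⬝ᵥ (Ω⁻¹ *ᵥ (Xᵀ *ᵥ ε + Xᵀ *ᵥ ((Xbar - X) *ᵥ θstar) - ρ • θstar)) := by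
        rw [← dotProduct_sub, hθhat, hy,
          ridge_sub_eq hΩ ((isUnit_iff_isUnit_det Ω).mp hΩpd.isUnit)]
    _ ≤ wnorm Ω⁻¹ x * wnorm Ω⁻¹ (Xᵀ *ᵥ ε + Xᵀ *ᵥ ((Xbar - X) *ᵥ θstar) - ρ • θstar) :=
        hΩinv.dotProduct_mulVec_le_wnorm_mul_wnorm x _
    _ ≤ _ := by
        refine mul_le_mul_of_nonneg_left ?_ (wnorm_nonneg x)
        linarith [hΩinv.wnorm_sub_le (Xᵀ *ᵥ ε + Xᵀ *ᵥ ((Xbar - X) *ᵥ θstar)) (ρ • θstar),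
          hΩinv.wnorm_add_le (Xᵀ *ᵥ ε) (Xᵀ *ᵥ ((Xbar - X) *ᵥ θstar))]
end

section
/- Let $\bar{M} \in \mathbb{R}^{n \times m}$ have rank exactly $r$, let $E \in \mathbb{R}^{n \times m}$ be arbitrary, and let $M = \bar{M} + E$. Let $\bar{M} = \bar{U}\bar{S}\bar{V}^\top$ be a compact SVD of $\bar{M}$, let $USV^\top$ be a rank-$r$ truncated SVD of $M$, let $\tilde{U}\tilde{\Sigma}\tilde{V}^\top$ be an SVD of the $r \times r$ matrix $\bar{U}^\top U$ (with $\tilde{U}, \tilde{V}$ orthogonal $r \times r$ matrices and $\tilde{\Sigma}$ diagonal nonnegative), and set $H = \tilde{U}\tilde{V}^\top$. Then $\|\bar{S}(H - \bar{U}^\top U)\| \leq 2\|E\|$. -/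
open Matrix

section Helpers

open scoped Matrix.Norms.L2Operator

lemma opNorm_eq_norm {n m : ℕ} (A : Matrix (Fin n) (Fin m) ℝ) : opNorm A = ‖A‖ := rfl

lemma real_conjT {p q : ℕ} (A : Matrix (Fin p) (Fin q) ℝ) : Aᴴ = Aᵀ := by
  ext i j; simp [conjTranspose_apply]

lemma norm_transpose' {p q : ℕ} (A : Matrix (Fin p) (Fin q) ℝ) : ‖Aᵀ‖ = ‖A‖ := by
  rw [← real_conjT]; exact l2_opNorm_conjTranspose A

lemma norm_one_le' {p : ℕ} : ‖(1 : Matrix (Fin p) (Fin p) ℝ)‖ ≤ 1 := by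
  rw [l2_opNorm_def]
  apply ContinuousLinearMap.opNorm_le_bound _ zero_le_one
  intro x
  have : Matrix.toEuclideanLin (1 : Matrix (Fin p) (Fin p) ℝ) x = x := by
    simp [Matrix.toEuclideanLin_apply]
  simp [this]

lemma norm_isometry_le {p q : ℕ} (U : Matrix (Fin p) (Fin q) ℝ) (h : Uᵀ * U = 1) :
    ‖U‖ ≤ 1 := by
  have h2 : ‖U‖ * ‖U‖ = ‖(1 : Matrix (Fin q) (Fin q) ℝ)‖ := by
    rw [← h, ← real_conjT, l2_opNorm_conjTranspose_mul_self]
  nlinarith [norm_nonneg U, norm_one_le' (p := q)]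

lemma norm_mul_orth_right {p q : ℕ} (A : Matrix (Fin p) (Fin q) ℝ)
    (Q : Matrix (Fin q) (Fin q) ℝ) (h1 : Qᵀ * Q = 1) (h2 : Q * Qᵀ = 1) :
    ‖A * Q‖ = ‖A‖ := by
  have hQ : ‖Q‖ ≤ 1 := norm_isometry_le Q h1
  have hQt : ‖Qᵀ‖ ≤ 1 := norm_isometry_le Qᵀ (by simpa using h2)
  apply le_antisymm
  · calc ‖A * Q‖ ≤ ‖A‖ * ‖Q‖ := l2_opNorm_mul A Q
      _ ≤ ‖A‖ := by nlinarith [norm_nonneg A]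
  · calc ‖A‖ = ‖A * Q * Qᵀ‖ := by rw [Matrix.mul_assoc, h2, Matrix.mul_one]
      _ ≤ ‖A * Q‖ * ‖Qᵀ‖ := l2_opNorm_mul _ _
      _ ≤ ‖A * Q‖ := by nlinarith [norm_nonneg (A * Q)]

lemma norm_proj_le {p q : ℕ} (U : Matrix (Fin p) (Fin q) ℝ) (h : Uᵀ * U = 1) :
    ‖(1 : Matrix (Fin p) (Fin p) ℝ) - U * Uᵀ‖ ≤ 1 := by
  set P : Matrix (Fin p) (Fin p) ℝ := 1 - U * Uᵀ with hP
  have hPt : Pᵀ = P := by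
    simp [hP, transpose_sub, transpose_mul, transpose_one]
  have key : (U * Uᵀ) * (U * Uᵀ) = U * Uᵀ := by
    rw [Matrix.mul_assoc U Uᵀ (U * Uᵀ), ← Matrix.mul_assoc Uᵀ U Uᵀ, h, Matrix.one_mul]
  have hPP : P * P = P := by
    have expand : P * P = 1 - U * Uᵀ - U * Uᵀ + (U * Uᵀ) * (U * Uᵀ) := by
      rw [hP]; noncomm_ring
    rw [expand, key, hP]; abel
  have hc : ‖P‖ * ‖P‖ = ‖P‖ := by
    conv_rhs => rw [← hPP]
    conv_lhs => rw [← l2_opNorm_conjTranspose_mul_self P]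
    rw [real_conjT, hPt]
  nlinarith [norm_nonneg P]

lemma norm_diagonal_le {p : ℕ} (d : Fin p → ℝ) (h : ∀ i, |d i| ≤ 1) :
    ‖(Matrix.diagonal d : Matrix (Fin p) (Fin p) ℝ)‖ ≤ 1 := by
  rw [Matrix.l2_opNorm_def]
  apply ContinuousLinearMap.opNorm_le_bound _ zero_le_one
  intro x
  rw [one_mul]
  have coord : ∀ i, ((Matrix.toEuclideanLin (Matrix.diagonal d)) x) i = d i * x i := by
    intro i
    simp [Matrix.toEuclideanLin_apply, Matrix.mulVec_diagonal]
  show ‖(Matrix.toEuclideanLin (Matrix.diagonal d)) x‖ ≤ ‖x‖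
  rw [EuclideanSpace.norm_eq, EuclideanSpace.norm_eq]
  apply Real.sqrt_le_sqrt
  apply Finset.sum_le_sum
  intro i _
  rw [coord i]
  have := h i
  have h1 : ‖d i * x i‖ = |d i| * ‖x i‖ := by
    simp [abs_mul, Real.norm_eq_abs]
  rw [h1]
  have h2 : |d i| ^ 2 ≤ 1 := by nlinarith [abs_nonneg (d i)]
  nlinarith [mul_le_mul_of_nonneg_right h2 (sq_nonneg ‖x i‖), sq_nonneg ‖x i‖]

lemma entry_le_norm {p q : ℕ} (A : Matrix (Fin p) (Fin q) ℝ) (i : Fin p) (j : Fin q) :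
    |A i j| ≤ ‖A‖ := by
  have hx := Matrix.l2_opNorm_mulVec A (EuclideanSpace.single j (1:ℝ))
  rw [EuclideanSpace.norm_single, norm_one, mul_one] at hx
  refine le_trans ?_ hx
  have hcoord : ((EuclideanSpace.equiv (Fin p) ℝ).symm <| A *ᵥ (EuclideanSpace.single j (1:ℝ))) i = A i j := by
    simp [Matrix.mulVec, dotProduct, EuclideanSpace.single_apply]
  calc |A i j| = Real.sqrt (‖((EuclideanSpace.equiv (Fin p) ℝ).symm <| A *ᵥ (EuclideanSpace.single j (1:ℝ))) i‖^2) := by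
        rw [hcoord]; rw [Real.norm_eq_abs, Real.sqrt_sq_eq_abs, abs_abs]
    _ ≤ ‖(EuclideanSpace.equiv (Fin p) ℝ).symm <| A *ᵥ (EuclideanSpace.single j (1:ℝ))‖ := by
        rw [EuclideanSpace.norm_eq]
        apply Real.sqrt_le_sqrt
        exact Finset.single_le_sum (f := fun k => ‖((EuclideanSpace.equiv (Fin p) ℝ).symm <| A *ᵥ (EuclideanSpace.single j (1:ℝ))) k‖^2) (fun k _ => by positivity) (Finset.mem_univ i)

end Helpers

open scoped Matrix.Norms.L2Operator

set_option maxHeartbeats 1000000 in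
/-- the aligned-rotation residual `S̄ (H - Ūᵀ U)` is controlled by twice
the perturbation size. -/
theorem stmt_12 {n m r : ℕ}
    (Mbar E M : Matrix (Fin n) (Fin m) ℝ)
    (Ubar : Matrix (Fin n) (Fin r) ℝ) (Sbar : Matrix (Fin r) (Fin r) ℝ)
    (Vbar : Matrix (Fin m) (Fin r) ℝ)
    (U : Matrix (Fin n) (Fin r) ℝ) (S : Matrix (Fin r) (Fin r) ℝ)
    (V : Matrix (Fin m) (Fin r) ℝ)
    (Utilde Stilde Vtilde H : Matrix (Fin r) (Fin r) ℝ)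
    (hrank : Mbar.rank = r)
    (hM : M = Mbar + E)
    (hUbar : Ubarᵀ * Ubar = 1) (hVbar : Vbarᵀ * Vbar = 1)
    (hSbarDiag : Sbar.IsDiag) (hSbarPos : ∀ i, 0 < Sbar i i)
    (hMbar : Mbar = Ubar * Sbar * Vbarᵀ)
    (hU : Uᵀ * U = 1) (hV : Vᵀ * V = 1)
    (hS : S = Matrix.diagonal (fun i : Fin r => singVal (i.val + 1) M))
    (hres : opNorm (M - U * S * Vᵀ) = singVal (r + 1) M)
    (hUtilde : Utildeᵀ * Utilde = 1 ∧ Utilde * Utildeᵀ = 1)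
    (hVtilde : Vtildeᵀ * Vtilde = 1 ∧ Vtilde * Vtildeᵀ = 1)
    (hSdiag : Stilde.IsDiag) (hSnonneg : ∀ i, 0 ≤ Stilde i i)
    (hsvd : Ubarᵀ * U = Utilde * Stilde * Vtildeᵀ)
    (hH : H = Utilde * Vtildeᵀ) :
    opNorm (Sbar * (H - Ubarᵀ * U)) ≤ 2 * opNorm E := by
  rw [opNorm_eq_norm, opNorm_eq_norm]
  -- basic norm bounds on the orthonormal frames
  have hnUbar : ‖Ubar‖ ≤ 1 := norm_isometry_le Ubar hUbar
  have hnUbarT : ‖Ubarᵀ‖ ≤ 1 := by rw [norm_transpose']; exact hnUbar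
  have hnVbarT : ‖Vbarᵀ‖ ≤ 1 := by rw [norm_transpose']; exact norm_isometry_le Vbar hVbar
  have hnU : ‖U‖ ≤ 1 := norm_isometry_le U hU
  -- diagonal representation of Stilde
  have hdiagS : Matrix.diagonal Stilde.diag = Stilde := hSdiag.diagonal_diag
  have hStildeT : Stildeᵀ = Stilde := by
    rw [← hdiagS, Matrix.diagonal_transpose]
  -- Stilde entries are ≤ 1
  have hSrepr : Stilde = Utildeᵀ * (Ubarᵀ * U) * Vtilde := by
    rw [hsvd, ← Matrix.mul_assoc, ← Matrix.mul_assoc, hUtilde.1, Matrix.one_mul,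
      Matrix.mul_assoc, hVtilde.1, Matrix.mul_one]
  have hnS : ‖Stilde‖ ≤ 1 := by
    have h1 : ‖Ubarᵀ * U‖ ≤ 1 := by
      calc ‖Ubarᵀ * U‖ ≤ ‖Ubarᵀ‖ * ‖U‖ := Matrix.l2_opNorm_mul _ _
        _ ≤ 1 := by nlinarith [norm_nonneg Ubarᵀ]
    have h2 : ‖Utildeᵀ‖ ≤ 1 := by
      rw [norm_transpose']; exact norm_isometry_le Utilde hUtilde.1
    have h3 : ‖Vtilde‖ ≤ 1 := norm_isometry_le Vtilde hVtilde.1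
    have h4 : ‖Utildeᵀ * (Ubarᵀ * U)‖ ≤ 1 := by
      have := Matrix.l2_opNorm_mul Utildeᵀ (Ubarᵀ * U)
      nlinarith [norm_nonneg (Ubarᵀ * U), norm_nonneg Utildeᵀ]
    calc ‖Stilde‖ = ‖Utildeᵀ * (Ubarᵀ * U) * Vtilde‖ := by rw [← hSrepr]
      _ ≤ ‖Utildeᵀ * (Ubarᵀ * U)‖ * ‖Vtilde‖ := Matrix.l2_opNorm_mul _ _
      _ ≤ 1 := by nlinarith [norm_nonneg (Utildeᵀ * (Ubarᵀ * U)), norm_nonneg Vtilde]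
  have hs_le_one : ∀ i, Stilde i i ≤ 1 := fun i =>
    le_trans (le_abs_self _) (le_trans (entry_le_norm Stilde i i) hnS)
  -- Step 1: rewrite the residual
  have step1 : Sbar * (H - Ubarᵀ * U) = (Sbar * Utilde * (1 - Stilde)) * Vtildeᵀ := by
    rw [hH, hsvd]; noncomm_ring
  -- the corrective diagonal matrix
  set D : Matrix (Fin r) (Fin r) ℝ := Matrix.diagonal (fun i => (1 + Stilde i i)⁻¹) with hD
  have hnD : ‖D‖ ≤ 1 := by
    apply norm_diagonal_le
    intro i
    have h0 := hSnonneg i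
    rw [abs_of_nonneg (by positivity)]
    rw [inv_le_one_iff₀]
    right; linarith
  have hfac : (1 : Matrix (Fin r) (Fin r) ℝ) - Stilde = (1 - Stilde * Stilde) * D := by
    rw [← hdiagS, hD]
    simp only [← Matrix.diagonal_one, Matrix.diagonal_sub, Matrix.diagonal_mul_diagonal]
    apply congrArg Matrix.diagonal
    funext i
    have h0 := hSnonneg i
    have hne : (1 : ℝ) + Stilde i i ≠ 0 := by positivity
    show (1 : ℝ) - Stilde.diag i = (1 - Stilde.diag i * Stilde.diag i) * (1 + Stilde i i)⁻¹
    simp only [Matrix.diag_apply]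
    field_simp
    ring
  -- Step 2-3: drop Vtildeᵀ and the diagonal factor
  have step2 : ‖Sbar * (H - Ubarᵀ * U)‖ ≤ ‖Sbar * Utilde * (1 - Stilde * Stilde)‖ := by
    rw [step1, norm_mul_orth_right _ Vtildeᵀ (by simpa using hVtilde.2) (by simpa using hVtilde.1)]
    rw [hfac, ← Matrix.mul_assoc]
    calc ‖Sbar * Utilde * (1 - Stilde * Stilde) * D‖
        ≤ ‖Sbar * Utilde * (1 - Stilde * Stilde)‖ * ‖D‖ := Matrix.l2_opNorm_mul _ _
      _ ≤ _ := by nlinarith [norm_nonneg (Sbar * Utilde * (1 - Stilde * Stilde))]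
  -- Step 4: reinstate Utildeᵀ and simplify
  have hsvdT : Uᵀ * Ubar = Vtilde * Stilde * Utildeᵀ := by
    have h := congrArg Matrix.transpose hsvd
    simp only [Matrix.transpose_mul, Matrix.transpose_transpose, hStildeT] at h
    rw [h, ← Matrix.mul_assoc]
  have step4 : Sbar * Utilde * (1 - Stilde * Stilde) * Utildeᵀ
      = Sbar * (1 - (Ubarᵀ * U) * (Uᵀ * Ubar)) := by
    rw [hsvd, hsvdT]
    have inner : (Utilde * Stilde * Vtildeᵀ) * (Vtilde * Stilde * Utildeᵀ)
        = Utilde * (Stilde * Stilde) * Utildeᵀ := by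
      rw [show (Utilde * Stilde * Vtildeᵀ) * (Vtilde * Stilde * Utildeᵀ)
          = Utilde * Stilde * (Vtildeᵀ * Vtilde) * (Stilde * Utildeᵀ) by noncomm_ring,
        hVtilde.1, Matrix.mul_one]
      noncomm_ring
    rw [inner]
    have expand : Sbar * Utilde * (1 - Stilde * Stilde) * Utildeᵀ
        = Sbar * (Utilde * Utildeᵀ) - Sbar * (Utilde * (Stilde * Stilde) * Utildeᵀ) := by
      noncomm_ring
    rw [expand, hUtilde.2, Matrix.mul_sub, Matrix.mul_one]
  have step4' : ‖Sbar * Utilde * (1 - Stilde * Stilde)‖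
      = ‖Sbar * (1 - (Ubarᵀ * U) * (Uᵀ * Ubar))‖ := by
    rw [← step4, norm_mul_orth_right _ Utildeᵀ (by simpa using hUtilde.2) (by simpa using hUtilde.1)]
  -- Step 5: representation via Mbar
  have hSbarT : Sbarᵀ = Sbar := by
    rw [← hSbarDiag.diagonal_diag, Matrix.diagonal_transpose]
  have hX : Vbarᵀ * Mbarᵀ = Sbar * Ubarᵀ := by
    rw [hMbar, Matrix.transpose_mul, Matrix.transpose_mul, Matrix.transpose_transpose,
      ← Matrix.mul_assoc, hVbar, Matrix.one_mul, hSbarT]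
  have step5 : Sbar * (1 - (Ubarᵀ * U) * (Uᵀ * Ubar))
      = Vbarᵀ * (Mbarᵀ * ((1 : Matrix (Fin n) (Fin n) ℝ) - U * Uᵀ)) * Ubar := by
    rw [← Matrix.mul_assoc Vbarᵀ Mbarᵀ ((1 : Matrix (Fin n) (Fin n) ℝ) - U * Uᵀ), hX]
    rw [Matrix.mul_sub Sbar, Matrix.mul_one,
      Matrix.mul_sub (Sbar * Ubarᵀ), Matrix.mul_one, Matrix.sub_mul]
    congr 1
    · rw [Matrix.mul_assoc, hUbar, Matrix.mul_one]
    · simp only [Matrix.mul_assoc]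
  -- Step 6: peel off Vbarᵀ and Ubar
  have step6 : ‖Vbarᵀ * (Mbarᵀ * ((1 : Matrix (Fin n) (Fin n) ℝ) - U * Uᵀ)) * Ubar‖
      ≤ ‖Mbarᵀ * ((1 : Matrix (Fin n) (Fin n) ℝ) - U * Uᵀ)‖ := by
    set X := Mbarᵀ * ((1 : Matrix (Fin n) (Fin n) ℝ) - U * Uᵀ)
    have h5 : ‖Vbarᵀ‖ * ‖X‖ ≤ ‖X‖ := by nlinarith [norm_nonneg X, norm_nonneg Vbarᵀ]
    calc ‖Vbarᵀ * X * Ubar‖ ≤ ‖Vbarᵀ * X‖ * ‖Ubar‖ := Matrix.l2_opNorm_mul _ _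
      _ ≤ ‖Vbarᵀ‖ * ‖X‖ * ‖Ubar‖ :=
          mul_le_mul_of_nonneg_right (Matrix.l2_opNorm_mul _ _) (norm_nonneg Ubar)
      _ ≤ ‖X‖ * 1 := mul_le_mul h5 hnUbar (norm_nonneg _) (norm_nonneg _)
      _ = ‖X‖ := mul_one _
  -- Step 7: transpose
  have step7 : ‖Mbarᵀ * ((1 : Matrix (Fin n) (Fin n) ℝ) - U * Uᵀ)‖
      = ‖((1 : Matrix (Fin n) (Fin n) ℝ) - U * Uᵀ) * Mbar‖ := by
    rw [← norm_transpose' (((1 : Matrix (Fin n) (Fin n) ℝ) - U * Uᵀ) * Mbar)]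
    congr 1
    rw [Matrix.transpose_mul, Matrix.transpose_sub, Matrix.transpose_one,
      Matrix.transpose_mul, Matrix.transpose_transpose]
  -- Step 8: split and bound
  have hproj0 : ((1 : Matrix (Fin n) (Fin n) ℝ) - U * Uᵀ) * (U * S * Vᵀ) = 0 := by
    rw [Matrix.sub_mul, Matrix.one_mul]
    have : (U * Uᵀ) * (U * S * Vᵀ) = U * S * Vᵀ := by
      calc (U * Uᵀ) * (U * S * Vᵀ) = U * ((Uᵀ * U) * (S * Vᵀ)) := by
            simp only [Matrix.mul_assoc]
        _ = U * S * Vᵀ := by rw [hU, Matrix.one_mul, Matrix.mul_assoc]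
    rw [this, sub_self]
  have hsplit : ((1 : Matrix (Fin n) (Fin n) ℝ) - U * Uᵀ) * Mbar
      = ((1 : Matrix (Fin n) (Fin n) ℝ) - U * Uᵀ) * (M - U * S * Vᵀ)
        - ((1 : Matrix (Fin n) (Fin n) ℝ) - U * Uᵀ) * E := by
    have hMb : Mbar = (M - U * S * Vᵀ) - E + (U * S * Vᵀ) := by rw [hM]; abel
    rw [hMb, Matrix.mul_add, hproj0, add_zero, Matrix.mul_sub]
  have hnP : ‖(1 : Matrix (Fin n) (Fin n) ℝ) - U * Uᵀ‖ ≤ 1 := norm_proj_le U hU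
  -- Weyl-type bound
  have hWeyl : singVal (r + 1) M ≤ ‖E‖ := by
    have hmem : opNorm E ∈ {c | ∃ B : Matrix (Fin n) (Fin m) ℝ, B.rank < r + 1 ∧ c = opNorm (M - B)} := by
      refine ⟨Mbar, by rw [hrank]; omega, ?_⟩
      congr 1
      rw [hM]; abel
    have hbdd : BddBelow {c | ∃ B : Matrix (Fin n) (Fin m) ℝ, B.rank < r + 1 ∧ c = opNorm (M - B)} := by
      refine ⟨0, fun c hc => ?_⟩
      obtain ⟨B, _, hcB⟩ := hc
      rw [hcB, opNorm_eq_norm]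
      exact norm_nonneg _
    exact csInf_le hbdd hmem
  have hres' : ‖M - U * S * Vᵀ‖ ≤ ‖E‖ := by
    rw [← opNorm_eq_norm (M - U * S * Vᵀ), hres]
    exact hWeyl
  have step8 : ‖((1 : Matrix (Fin n) (Fin n) ℝ) - U * Uᵀ) * Mbar‖ ≤ 2 * ‖E‖ := by
    rw [hsplit]
    calc ‖_ - _‖ ≤ ‖((1 : Matrix (Fin n) (Fin n) ℝ) - U * Uᵀ) * (M - U * S * Vᵀ)‖
            + ‖((1 : Matrix (Fin n) (Fin n) ℝ) - U * Uᵀ) * E‖ := norm_sub_le _ _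
      _ ≤ ‖M - U * S * Vᵀ‖ + ‖E‖ := by
          have h1 := Matrix.l2_opNorm_mul ((1 : Matrix (Fin n) (Fin n) ℝ) - U * Uᵀ) (M - U * S * Vᵀ)
          have h2 := Matrix.l2_opNorm_mul ((1 : Matrix (Fin n) (Fin n) ℝ) - U * Uᵀ) E
          have := norm_nonneg (M - U * S * Vᵀ)
          have := norm_nonneg E
          nlinarith
      _ ≤ 2 * ‖E‖ := by linarith
  calc ‖Sbar * (H - Ubarᵀ * U)‖ ≤ ‖Sbar * Utilde * (1 - Stilde * Stilde)‖ := step2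
    _ = ‖Sbar * (1 - (Ubarᵀ * U) * (Uᵀ * Ubar))‖ := step4'
    _ = ‖Vbarᵀ * (Mbarᵀ * ((1 : Matrix (Fin n) (Fin n) ℝ) - U * Uᵀ)) * Ubar‖ := by rw [step5]
    _ ≤ ‖Mbarᵀ * ((1 : Matrix (Fin n) (Fin n) ℝ) - U * Uᵀ)‖ := step6
    _ = ‖((1 : Matrix (Fin n) (Fin n) ℝ) - U * Uᵀ) * Mbar‖ := step7
    _ ≤ 2 * ‖E‖ := step8
end
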